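/- arXiv:1306.5026 — 2 statements merged into one kernel-verified Lean document; each statement's English description precedes it below -/
import Mathlib

section
/- For every tree T on n ≥ 2 vertices, there exists a set S of vertices, all having the same degree in T, such that the subgraph induced by S has maximum degree at most 1 and |S| ≥ 2(n+2)/7. -/
/-!
Summing degrees in a tree with `n ≥ 2` vertices, `n₁` leaves and `n₂` vertices of degree two
gives `n + 2 ≤ 2 n₁ + n₂`. The leaves are a `1`-independent set. The degree-two vertices induce
a disjoint union of paths, from which a `1`-independent subset of at least `2 n₂ / 3` vertices is
chosen greedily. If `n₁ < 2 (n + 2) / 7` then `n₂ > 3 (n + 2) / 7`, and the second set is large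
enough.
-/

open Finset

namespace SimpleGraph

variable {V : Type*} {G : SimpleGraph V}

lemma IsAcyclic.eq_penultimate_of_dist_add_one (hG : G.IsAcyclic) {r u v : V} {p : G.Walk r v}
    (hp : p.IsPath) (hadj : G.Adj u v) (hdist : G.dist r u + 1 = G.dist r v) :
    u = p.penultimate := by
  obtain ⟨q, -, hq⟩ := (p.reachable.trans hadj.symm.reachable).exists_path_of_dist
  have hqp : (q.concat hadj).IsPath :=
    (q.concat hadj).isPath_of_length_eq_dist (by rw [Walk.length_concat, hq, hdist])
  rw [← Subtype.mk.inj ((hG.subsingleton_path r v).elim ⟨_, hqp⟩ ⟨p, hp⟩), Walk.penultimate_concat]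

lemma IsAcyclic.exists_card_filter_adj_le_one [DecidableRel G.Adj] (hG : G.IsAcyclic)
    {A : Finset V} (hA : A.Nonempty) : ∃ v ∈ A, #(A.filter (G.Adj v)) ≤ 1 := by
  classical
  obtain ⟨r, hr⟩ := hA
  -- a vertex of `A` farthest from `r` within its component has only its parent as a neighbour
  obtain ⟨v, hv, hmax⟩ := (A.filter (G.Reachable r)).exists_max_image (G.dist r)
    ⟨r, mem_filter.2 ⟨hr, .refl r⟩⟩
  rw [mem_filter] at hv
  obtain ⟨p, hp, -⟩ := hv.2.exists_path_of_dist
  have hparent : ∀ u ∈ A.filter (G.Adj v), u = p.penultimate := by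
    intro u hu
    rw [mem_filter] at hu
    have hle := hmax u (mem_filter.2 ⟨hu.1, hv.2.trans hu.2.reachable⟩)
    have := hG.dist_eq_dist_add_one_of_adj_of_reachable r hu.2 hv.2
    exact hG.eq_penultimate_of_dist_add_one hp hu.2.symm (by omega)
  exact ⟨v, hv.1, card_le_one.2 fun a ha b hb => (hparent a ha).trans (hparent b hb).symm⟩

variable [DecidableRel G.Adj]

lemma card_filter_adj_le_degree [Fintype V] (S : Finset V) (v : V) :
    #(S.filter (G.Adj v)) ≤ G.degree v := by
  rw [← card_neighborFinset_eq_degree]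
  exact card_le_card fun u hu => (mem_neighborFinset G v u).2 (mem_filter.1 hu).2

variable (G) in
def IsKIndependent (k : ℕ) (S : Finset V) : Prop :=
  ∀ v ∈ S, #(S.filter (G.Adj v)) ≤ k

lemma isKIndependent_of_degree_le [Fintype V] {k : ℕ} {S : Finset V}
    (h : ∀ v ∈ S, G.degree v ≤ k) : G.IsKIndependent k S :=
  fun v hv => (card_filter_adj_le_degree S v).trans (h v hv)

lemma IsKIndependent.mono {k : ℕ} {A B : Finset V} (hA : G.IsKIndependent k A) (hBA : B ⊆ A) :
    G.IsKIndependent k B :=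
  fun v hv => (card_le_card (filter_subset_filter _ hBA)).trans (hA v (hBA hv))

theorem IsTree.card_add_two_le [Fintype V] [Nontrivial V] (hG : G.IsTree) :
    Fintype.card V + 2 ≤ 2 * #{v | G.degree v = 1} + #{v | G.degree v = 2} := by
  have hpos := hG.connected.preconnected.degree_pos_of_nontrivial
  have hvertex : ∀ v, 3 ≤ G.degree v +
      (2 * (if G.degree v = 1 then 1 else 0) + if G.degree v = 2 then 1 else 0) := by
    intro v
    have := hpos v
    split_ifs <;> omega
  have hsum := Finset.sum_le_sum fun v (_ : v ∈ univ) => hvertex v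
  simp only [sum_add_distrib, ← mul_sum, ← card_filter, sum_const, card_univ, smul_eq_mul,
    sum_degrees_eq_twice_card_edges] at hsum
  have := hG.card_edgeFinset
  omega

variable [DecidableEq V]

lemma isKIndependent_of_card_le {k : ℕ} {S : Finset V} (h : #S ≤ k + 1) :
    G.IsKIndependent k S := by
  intro v hv
  have : S.filter (G.Adj v) ⊆ S.erase v := fun u hu =>
    mem_erase.2 ⟨(G.ne_of_adj (mem_filter.1 hu).2).symm, (mem_filter.1 hu).1⟩
  have := card_le_card this
  rw [card_erase_of_mem hv] at this
  omega

lemma IsKIndependent.union {k : ℕ} {S P : Finset V} (hS : G.IsKIndependent k S)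
    (hP : G.IsKIndependent k P) (hSP : ∀ x ∈ S, ∀ y ∈ P, ¬ G.Adj x y) :
    G.IsKIndependent k (S ∪ P) := by
  intro v hv
  rw [filter_union]
  rcases mem_union.1 hv with hvS | hvP
  · rw [filter_false_of_mem fun y hy => hSP v hvS y hy, union_empty]
    exact hS v hvS
  · rw [filter_false_of_mem fun y hy hadj => hSP y hy v hvP hadj.symm, empty_union]
    exact hP v hvP

/-- Witnesses: `v` has at most one neighbour in `A`; if it has none, `P = R = {v}`, otherwise
`P = {v, w}` for that neighbour `w` and `R` is the closed neighbourhood of `w` in `A`. -/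
lemma IsAcyclic.exists_separated_piece (hG : G.IsAcyclic) {A : Finset V}
    (hA : G.IsKIndependent 2 A) (hne : A.Nonempty) :
    ∃ R ⊆ A, R.Nonempty ∧ ∃ P ⊆ R, G.IsKIndependent 1 P ∧ 2 * #R ≤ 3 * #P ∧
      ∀ x ∈ P, ∀ y ∈ A \ R, ¬ G.Adj x y := by
  obtain ⟨v, hvA, hv⟩ := hG.exists_card_filter_adj_le_one hne
  rcases Nat.le_one_iff_eq_zero_or_eq_one.1 hv with h0 | h1
  · refine ⟨{v}, singleton_subset_iff.2 hvA, singleton_nonempty v, {v}, subset_rfl,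
      isKIndependent_of_card_le (by simp), by simp, ?_⟩
    intro x hx y hy hadj
    rw [mem_singleton] at hx
    subst hx
    exact filter_eq_empty_iff.1 (card_eq_zero.1 h0) (mem_sdiff.1 hy).1 hadj
  · obtain ⟨w, hw⟩ := card_eq_one.1 h1
    have hvw : ∀ y ∈ A, G.Adj v y ↔ y = w := fun y hy => by
      rw [← mem_singleton, ← hw, mem_filter, and_iff_right hy]
    have hwA : w ∈ A := (mem_filter.1 (hw ▸ mem_singleton_self w)).1
    have hadj : G.Adj v w := (hvw w hwA).2 rfl
    refine ⟨insert w (A.filter (G.Adj w)), insert_subset hwA (filter_subset _ A),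
      insert_nonempty w _, {v, w}, ?_, isKIndependent_of_card_le (card_le_two.trans (by omega)), ?_, ?_⟩
    · exact insert_subset (mem_insert_of_mem (mem_filter.2 ⟨hvA, hadj.symm⟩))
        (singleton_subset_iff.2 (mem_insert_self w _))
    · have := (card_insert_le w _).trans (Nat.succ_le_succ (hA w hwA))
      rw [card_pair hadj.ne]
      omega
    · intro x hx y hy hxy
      obtain ⟨hyA, hyR⟩ := mem_sdiff.1 hy
      rcases mem_insert.1 hx with rfl | hx
      · exact hyR ((hvw y hyA).1 hxy ▸ mem_insert_self y _)
      · rw [mem_singleton.1 hx] at hxy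
        exact hyR (mem_insert_of_mem (mem_filter.2 ⟨hyA, hxy⟩))

theorem IsAcyclic.exists_isKIndependent_one_subset (hG : G.IsAcyclic) (A : Finset V)
    (hA : G.IsKIndependent 2 A) : ∃ S ⊆ A, G.IsKIndependent 1 S ∧ 2 * #A ≤ 3 * #S := by
  induction A using Finset.strongInduction with
  | H A ih =>
  rcases A.eq_empty_or_nonempty with rfl | hne
  · exact ⟨∅, subset_rfl, isKIndependent_of_card_le (by simp), by simp⟩
  obtain ⟨R, hRA, hRne, P, hPR, hP, hRP, hsep⟩ := hG.exists_separated_piece hA hne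
  obtain ⟨S, hSA, hS, hSA'⟩ := ih (A \ R) (sdiff_ssubset hRA hRne) (hA.mono sdiff_subset)
  refine ⟨S ∪ P, union_subset (hSA.trans sdiff_subset) (hPR.trans hRA),
    hS.union hP fun x hx y hy hxy => hsep y hy x (hSA hx) hxy.symm, ?_⟩
  have hdisj : Disjoint S P :=
    Finset.disjoint_left.2 fun x hx hxP => (mem_sdiff.1 (hSA hx)).2 (hPR hxP)
  have := card_sdiff_add_card_eq_card hRA
  rw [card_union_of_disjoint hdisj]
  omega

end SimpleGraph

open SimpleGraph

/-- For every tree `T` on `n ≥ 2` vertices there is a set of vertices all of the same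
degree, inducing a subgraph of maximum degree at most `1`, of size at least `2(n+2)/7`. -/
theorem reg1Indep_tree {V : Type*} [Fintype V] [DecidableEq V] (T : SimpleGraph V)
    [DecidableRel T.Adj] (hconn : T.Connected) (hacyc : T.IsAcyclic)
    (hn : 2 ≤ Fintype.card V) :
    ∃ S : Finset V, (∃ d : ℕ, ∀ v ∈ S, T.degree v = d) ∧
      (∀ v ∈ S, (S.filter (T.Adj v)).card ≤ 1) ∧
      2 * ((Fintype.card V : ℝ) + 2) / 7 ≤ (S.card : ℝ) := by
  have : Nontrivial V := Fintype.one_lt_card_iff_nontrivial.1 hn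
  have htree : T.IsTree := ⟨hconn, hacyc⟩
  set L : Finset V := {v | T.degree v = 1}
  set D : Finset V := {v | T.degree v = 2}
  obtain ⟨S, hSD, hS, hcardS⟩ := hacyc.exists_isKIndependent_one_subset D
    (isKIndependent_of_degree_le fun v hv => (mem_filter.1 hv).2.le)
  by_cases hL : 2 * ((Fintype.card V : ℝ) + 2) / 7 ≤ #L
  · exact ⟨L, ⟨1, fun v hv => (mem_filter.1 hv).2⟩,
      isKIndependent_of_degree_le fun v hv => (mem_filter.1 hv).2.le, hL⟩
  · refine ⟨S, ⟨2, fun v hv => (mem_filter.1 (hSD hv)).2⟩, hS, ?_⟩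
    have hcount : (Fintype.card V + 2 : ℝ) ≤ 2 * #L + #D := by
      exact_mod_cast htree.card_add_two_le
    have hcardS' : 2 * (#D : ℝ) ≤ 3 * #S := by exact_mod_cast hcardS
    linarith
end

section
/- Let G be a k-tree on n ≥ k + t + 2 vertices, where t ≥ 0 is an integer. Then the subgraph of G induced by the vertices of degree exactly k + t is (t² + t)/2-degenerate. -/
/-!
Let `v` be the last vertex of `S` in a construction order of the `k`-tree. Its neighbours in `S`
were present when `v` was added, so together with `v` they form a clique `W` of vertices of
degree `k + t`; it suffices to show `#W ≤ t + 1`. If `W` avoids the initial `(k+1)`-clique, the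
first vertex of `W` has exactly `t` later neighbours and all of `W` follows it. Otherwise an
initial vertex of `W` has exactly `t` added neighbours, which include the added part `W₁` of `W`.
For the initial part `W₀` we induct: since a `k`-tree has no `(k+2)`-clique, the first added
vertex `z` outside `W₁` is adjacent to all but at most one vertex of `W₀`, and adding `z` to `W₁`
lowers the number of remaining added neighbours of each of the others by one. Here
`n ≥ k + t + 2` guarantees that `z` exists.
-/

open Finset

/-- `G` is a `k`-tree: there is an enumeration of the vertices in which the first
`k+1` vertices form a clique and every later vertex has exactly `k` earlier
neighbors, which form a clique. -/
def IsKTree {V : Type*} [Fintype V] [DecidableEq V] (k : ℕ) (G : SimpleGraph V)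
    [DecidableRel G.Adj] : Prop :=
  ∃ f : V ≃ Fin (Fintype.card V),
    (∀ u v : V, (f u : ℕ) < k + 1 → (f v : ℕ) < k + 1 → u ≠ v → G.Adj u v) ∧
    (∀ v : V, k + 1 ≤ (f v : ℕ) →
      (univ.filter (fun u => G.Adj u v ∧ (f u : ℕ) < (f v : ℕ))).card = k ∧
      ∀ u w : V, G.Adj u v → G.Adj w v → (f u : ℕ) < (f v : ℕ) → (f w : ℕ) < (f v : ℕ) →
        u ≠ w → G.Adj u w)

section

variable {V : Type*} [Fintype V]

theorem card_filter_equiv_val_lt (f : V ≃ Fin (Fintype.card V)) (m : ℕ) :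
    #{v | (f v : ℕ) < m} = min (Fintype.card V) m := by
  rw [← Fin.card_filter_val_lt, ← card_map f.toEmbedding, map_filter]
  simp

def addedVertices (k : ℕ) (f : V ≃ Fin (Fintype.card V)) : Finset V :=
  {v | k + 1 ≤ (f v : ℕ)}

@[simp]
theorem mem_addedVertices {k : ℕ} {f : V ≃ Fin (Fintype.card V)} {v : V} :
    v ∈ addedVertices k f ↔ k + 1 ≤ (f v : ℕ) := by
  simp [addedVertices]

theorem card_addedVertices_add (k : ℕ) (f : V ≃ Fin (Fintype.card V))
    (hk : k + 1 ≤ Fintype.card V) : #(addedVertices k f) + (k + 1) = Fintype.card V := by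
  have := card_filter_add_card_filter_not (s := univ) (fun v => (f v : ℕ) < k + 1)
  simp only [not_lt, card_filter_equiv_val_lt, card_univ] at this
  rw [addedVertices]
  omega

namespace SimpleGraph

variable (G : SimpleGraph V) [DecidableRel G.Adj] (f : V ≃ Fin (Fintype.card V))

def earlierNeighborFinset (v : V) : Finset V := {u | G.Adj u v ∧ (f u : ℕ) < (f v : ℕ)}

def laterNeighborFinset (v : V) : Finset V := {u | G.Adj v u ∧ (f v : ℕ) < (f u : ℕ)}

theorem card_earlierNeighborFinset_add_card_laterNeighborFinset (v : V) :
    #(G.earlierNeighborFinset f v) + #(G.laterNeighborFinset f v) = G.degree v := by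
  have hearlier : {u ∈ G.neighborFinset v | (f u : ℕ) < (f v : ℕ)} =
      G.earlierNeighborFinset f v := by
    ext u
    simp [earlierNeighborFinset, adj_comm]
  have hlater : {u ∈ G.neighborFinset v | ¬ (f u : ℕ) < (f v : ℕ)} =
      G.laterNeighborFinset f v := by
    ext u
    simp only [laterNeighborFinset, mem_filter, mem_univ, true_and, mem_neighborFinset,
      not_lt, and_congr_right_iff]
    exact fun hvu => ⟨fun h => h.lt_of_ne fun h' => hvu.ne (f.injective (Fin.ext h')), le_of_lt⟩
  rw [← hearlier, ← hlater, card_filter_add_card_filter_not, card_neighborFinset_eq_degree]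

end SimpleGraph

structure IsKTreeOrder (k : ℕ) (G : SimpleGraph V) [DecidableRel G.Adj]
    (f : V ≃ Fin (Fintype.card V)) : Prop where
  adj_of_initial : ∀ u v : V, (f u : ℕ) < k + 1 → (f v : ℕ) < k + 1 → u ≠ v → G.Adj u v
  card_earlierNeighborFinset : ∀ v : V, k + 1 ≤ (f v : ℕ) → #(G.earlierNeighborFinset f v) = k
  adj_of_earlier : ∀ v : V, k + 1 ≤ (f v : ℕ) → ∀ u w : V, G.Adj u v → G.Adj w v →
    (f u : ℕ) < (f v : ℕ) → (f w : ℕ) < (f v : ℕ) → u ≠ w → G.Adj u w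

theorem IsKTree.exists_isKTreeOrder [DecidableEq V] {k : ℕ} {G : SimpleGraph V}
    [DecidableRel G.Adj] (hG : IsKTree k G) : ∃ f, IsKTreeOrder k G f :=
  let ⟨f, hinit, hlater⟩ := hG
  ⟨f, hinit, fun v hv => (hlater v hv).1, fun v hv => (hlater v hv).2⟩

namespace IsKTreeOrder

variable {k : ℕ} {G : SimpleGraph V} [DecidableRel G.Adj] {f : V ≃ Fin (Fintype.card V)}

theorem isClique_insert_earlierNeighborFinset (hf : IsKTreeOrder k G f) (v : V) :
    G.IsClique (insert v (G.earlierNeighborFinset f v : Set V)) := by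
  rw [SimpleGraph.isClique_insert]
  refine ⟨fun u hu w hw huw => ?_, fun u hu _ => ?_⟩
  · simp only [SimpleGraph.earlierNeighborFinset, coe_filter, mem_univ, true_and,
      Set.mem_ofPred_eq] at hu hw
    by_cases hv : k + 1 ≤ (f v : ℕ)
    · exact hf.adj_of_earlier v hv u w hu.1 hw.1 hu.2 hw.2 huw
    · exact hf.adj_of_initial u w (by omega) (by omega) huw
  · simp only [SimpleGraph.earlierNeighborFinset, coe_filter, mem_univ, true_and,
      Set.mem_ofPred_eq] at hu
    exact hu.1.symm

theorem isClique_insert_filter_adj_of_forall_le [DecidableEq V] (hf : IsKTreeOrder k G f)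
    {S : Finset V} {v : V} (hmax : ∀ u ∈ S, (f u : ℕ) ≤ (f v : ℕ)) :
    G.IsClique (insert v (S.filter (G.Adj v)) : Finset V) := by
  have hsub : S.filter (G.Adj v) ⊆ G.earlierNeighborFinset f v := fun u hu => by
    obtain ⟨huS, hvu⟩ := mem_filter.mp hu
    exact mem_filter.mpr ⟨mem_univ u, hvu.symm,
      (hmax u huS).lt_of_ne fun h => hvu.ne' (f.injective (Fin.ext h))⟩
  rw [coe_insert]
  exact (hf.isClique_insert_earlierNeighborFinset v).subset
    (Set.insert_subset_insert (coe_subset.mpr hsub))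

theorem card_laterNeighborFinset_add (hf : IsKTreeOrder k G f) {v : V}
    (hv : k + 1 ≤ (f v : ℕ)) : #(G.laterNeighborFinset f v) + k = G.degree v := by
  rw [← G.card_earlierNeighborFinset_add_card_laterNeighborFinset f v,
    hf.card_earlierNeighborFinset v hv, add_comm]

variable [DecidableEq V]

theorem cliqueFree (hf : IsKTreeOrder k G f) : G.CliqueFree (k + 2) := by
  rintro K ⟨hK, hcard⟩
  obtain ⟨m, hmK, hmax⟩ := K.exists_max_image (fun v => (f v : ℕ)) (card_pos.mp (by omega))
  by_cases hm : (f m : ℕ) < k + 1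
  · have hsub : K ⊆ ({v | (f v : ℕ) < k + 1} : Finset V) := fun v hv =>
      mem_filter.mpr ⟨mem_univ v, (hmax v hv).trans_lt hm⟩
    have := (card_le_card hsub).trans_eq (card_filter_equiv_val_lt f (k + 1))
    omega
  · have hsub : K.erase m ⊆ G.earlierNeighborFinset f m := fun u hu => by
      obtain ⟨hum, huK⟩ := mem_erase.mp hu
      exact mem_filter.mpr ⟨mem_univ u, hK huK hmK hum,
        (hmax u huK).lt_of_ne fun h => hum (f.injective (Fin.ext h))⟩
    have := card_le_card hsub
    rw [card_erase_of_mem hmK, hf.card_earlierNeighborFinset m (by omega)] at this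
    omega

theorem card_neighborFinset_inter_addedVertices_add (hf : IsKTreeOrder k G f)
    (hk : k + 1 ≤ Fintype.card V) {v : V} (hv : (f v : ℕ) < k + 1) :
    #(G.neighborFinset v ∩ addedVertices k f) + k = G.degree v := by
  have hinitial : {u ∈ G.neighborFinset v | (f u : ℕ) < k + 1} =
      ({u | (f u : ℕ) < k + 1} : Finset V).erase v := by
    ext u
    simp only [mem_filter, mem_erase, mem_univ, true_and, SimpleGraph.mem_neighborFinset]
    exact ⟨fun ⟨hvu, hu⟩ => ⟨hvu.ne', hu⟩,
      fun ⟨huv, hu⟩ => ⟨hf.adj_of_initial v u hv hu (Ne.symm huv), hu⟩⟩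
  have hsplit := card_filter_add_card_filter_not (s := G.neighborFinset v)
    (fun u => (f u : ℕ) < k + 1)
  rw [hinitial, card_erase_of_mem (by simpa using hv), card_filter_equiv_val_lt,
    SimpleGraph.card_neighborFinset_eq_degree] at hsplit
  have hadded : G.neighborFinset v ∩ addedVertices k f =
      {u ∈ G.neighborFinset v | ¬ (f u : ℕ) < k + 1} := by
    ext u
    simp
  rw [hadded, ← hsplit]
  omega

theorem card_le_card_filter_adj_add_one (hf : IsKTreeOrder k G f) {B W : Finset V}
    (hW : ∀ w ∈ W, (f w : ℕ) < k + 1) (hWB : ∀ w ∈ W, ∀ b ∈ B, G.Adj w b) {z : V}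
    (hz : z ∈ addedVertices k f \ B) (hmin : ∀ y ∈ addedVertices k f \ B, (f z : ℕ) ≤ f y) :
    #W ≤ #{w ∈ W | G.Adj w z} + 1 := by
  obtain ⟨hzadded, hzB⟩ := mem_sdiff.mp hz
  rw [mem_addedVertices] at hzadded
  set C := G.earlierNeighborFinset f z
  -- an earlier neighbour of `z` is initial or, by the minimality of `z`, lies in `B`
  have hadj_C : ∀ w ∈ W, ∀ u ∈ C, w ≠ u → G.Adj w u := by
    intro w hw u hu hwu
    simp only [C, SimpleGraph.earlierNeighborFinset, mem_filter, mem_univ, true_and] at hu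
    by_cases hu_init : (f u : ℕ) < k + 1
    · exact hf.adj_of_initial w u (hW w hw) hu_init hwu
    · have huB : u ∈ B := by
        by_contra huB
        have := hmin u (mem_sdiff.mpr ⟨mem_addedVertices.mpr (by omega), huB⟩)
        omega
      exact hWB w hw u huB
  have hC : G.IsClique (C : Set V) :=
    (hf.isClique_insert_earlierNeighborFinset z).subset (Set.subset_insert _ _)
  -- two such vertices would extend `C`, of size `k`, to a `(k + 2)`-clique
  have hnonadj : #{w ∈ W | ¬ G.Adj w z} ≤ 1 := by
    refine card_le_one.mpr fun a ha b hb => by_contra fun hab => ?_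
    simp only [mem_filter] at ha hb
    have hbC : b ∉ C := fun h => hb.2 (mem_filter.mp h).2.1
    have haC : a ∉ insert b C :=
      mem_insert.not.mpr (not_or.mpr ⟨hab, fun h => ha.2 (mem_filter.mp h).2.1⟩)
    refine hf.cliqueFree (insert a (insert b C)) ⟨?_, ?_⟩
    · rw [coe_insert, coe_insert, SimpleGraph.isClique_insert, SimpleGraph.isClique_insert]
      refine ⟨⟨hC, hadj_C b hb.1⟩, ?_⟩
      rintro u (rfl | hu) hau
      · exact hf.adj_of_initial a u (hW a ha.1) (hW u hb.1) hau
      · exact hadj_C a ha.1 u hu hau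
    · rw [card_insert_of_notMem haC, card_insert_of_notMem hbC,
        hf.card_earlierNeighborFinset z hzadded]
  have hsplit := card_filter_add_card_filter_not (s := W) (fun w => G.Adj w z)
  omega

theorem card_le_of_forall_adj (hf : IsKTreeOrder k G f) (s : ℕ) {B W : Finset V}
    (hW : ∀ w ∈ W, (f w : ℕ) < k + 1) (hWB : ∀ w ∈ W, ∀ b ∈ B, G.Adj w b)
    (hdeg : ∀ w ∈ W, #(G.neighborFinset w ∩ (addedVertices k f \ B)) ≤ s)
    (hs : s < #(addedVertices k f \ B)) : #W ≤ s + 1 := by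
  induction s using Nat.strong_induction_on generalizing B W with
  | _ s ih =>
  obtain ⟨z, hz, hmin⟩ :=
    (addedVertices k f \ B).exists_min_image (fun y => (f y : ℕ)) (card_pos.mp (by omega))
  refine (hf.card_le_card_filter_adj_add_one hW hWB hz hmin).trans (Nat.add_le_add_right ?_ 1)
  have hdeg_erase : ∀ w ∈ W, G.Adj w z →
      #(G.neighborFinset w ∩ (addedVertices k f \ insert z B)) + 1 ≤ s := by
    intro w hw hwz
    rw [sdiff_insert, inter_erase, card_erase_add_one
      (mem_inter.mpr ⟨(G.mem_neighborFinset w z).mpr hwz, hz⟩)]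
    exact hdeg w hw
  rcases s with _ | s
  · refine (card_eq_zero.mpr (filter_eq_empty_iff.mpr fun w hw hwz => ?_)).le
    have := hdeg_erase w hw hwz
    omega
  · refine ih s (Nat.lt_succ_self s) (B := insert z B) (fun w hw => hW w (mem_filter.mp hw).1)
      ?_ (fun w hw => ?_) ?_
    · intro w hw b hb
      obtain ⟨hwW, hwz⟩ := mem_filter.mp hw
      exact (mem_insert.mp hb).elim (· ▸ hwz) (hWB w hwW b)
    · obtain ⟨hwW, hwz⟩ := mem_filter.mp hw
      have := hdeg_erase w hwW hwz
      omega
    · rw [sdiff_insert, card_erase_of_mem hz]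
      omega

theorem card_le_of_isClique_of_subset_addedVertices (hf : IsKTreeOrder k G f) {t : ℕ}
    {W : Finset V} (hW : G.IsClique (W : Set V)) (hW_added : W ⊆ addedVertices k f)
    (hdeg : ∀ w ∈ W, G.degree w = k + t) : #W ≤ t + 1 := by
  obtain rfl | hne := W.eq_empty_or_nonempty
  · simp
  obtain ⟨w, hw, hmin⟩ := W.exists_min_image (fun y => (f y : ℕ)) hne
  have hsub : W.erase w ⊆ G.laterNeighborFinset f w := fun u hu => by
    obtain ⟨huw, huW⟩ := mem_erase.mp hu
    exact mem_filter.mpr ⟨mem_univ u, hW hw huW (Ne.symm huw),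
      (hmin u huW).lt_of_ne fun h => huw (f.injective (Fin.ext h.symm))⟩
  have hlater := hf.card_laterNeighborFinset_add (mem_addedVertices.mp (hW_added hw))
  have := card_le_card hsub
  rw [card_erase_of_mem hw] at this
  rw [hdeg w hw] at hlater
  omega

theorem card_le_of_isClique (hf : IsKTreeOrder k G f) {t : ℕ}
    (hn : k + t + 2 ≤ Fintype.card V) {W : Finset V} (hW : G.IsClique (W : Set V))
    (hdeg : ∀ w ∈ W, G.degree w = k + t) : #W ≤ t + 1 := by
  set W₁ := W ∩ addedVertices k f
  set W₀ := W \ addedVertices k f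
  have hW₀ : ∀ w ∈ W₀, (f w : ℕ) < k + 1 := fun w hw => by
    simpa using (mem_sdiff.mp hw).2
  obtain hW₀_empty | ⟨w₀, hw₀⟩ := W₀.eq_empty_or_nonempty
  · rw [sdiff_eq_empty_iff_subset] at hW₀_empty
    exact hf.card_le_of_isClique_of_subset_addedVertices hW hW₀_empty hdeg
  have hW₁_sub : ∀ w ∈ W₀, W₁ ⊆ G.neighborFinset w ∩ addedVertices k f := fun w hw u hu => by
    obtain ⟨hwW, hw_init⟩ := mem_sdiff.mp hw
    obtain ⟨huW, hu_added⟩ := mem_inter.mp hu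
    exact mem_inter.mpr ⟨(G.mem_neighborFinset w u).mpr
      (hW hwW huW fun h => hw_init (h ▸ hu_added)), hu_added⟩
  have hcard_added : ∀ w ∈ W₀, #(G.neighborFinset w ∩ addedVertices k f) = t := fun w hw => by
    have := hf.card_neighborFinset_inter_addedVertices_add (by omega) (hW₀ w hw)
    rw [hdeg w (mem_sdiff.mp hw).1] at this
    omega
  have hW₁_card : #W₁ ≤ t := (card_le_card (hW₁_sub w₀ hw₀)).trans_eq (hcard_added w₀ hw₀)
  have hW₀_card : #W₀ ≤ t - #W₁ + 1 := by
    refine hf.card_le_of_forall_adj (t - #W₁) (B := W₁) hW₀ (fun w hw u hu => ?_)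
      (fun w hw => ?_) ?_
    · exact (G.mem_neighborFinset w u).mp (mem_inter.mp (hW₁_sub w hw hu)).1
    · rw [← inter_sdiff_assoc, card_sdiff_of_subset (hW₁_sub w hw), hcard_added w hw]
    · have : #(addedVertices k f \ W₁) + #W₁ = #(addedVertices k f) :=
        card_sdiff_add_card_eq_card inter_subset_right
      have := card_addedVertices_add k f (by omega)
      omega
  have : #W₁ + #W₀ = #W := card_inter_add_card_sdiff _ _
  omega

end IsKTreeOrder

end

/-- In a `k`-tree on `n ≥ k + t + 2` vertices (`t ≥ 0`), the subgraph induced by the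
vertices of degree `k + t` is `(t² + t)/2`-degenerate: every nonempty set of
degree-`(k+t)` vertices contains a vertex with at most `(t² + t)/2` neighbors in it. -/
theorem ktree_degree_class_degenerate {V : Type*} [Fintype V] [DecidableEq V] (k t : ℕ)
    (G : SimpleGraph V) [DecidableRel G.Adj] (hG : IsKTree k G)
    (hn : k + t + 2 ≤ Fintype.card V) :
    ∀ S : Finset V, (∀ v ∈ S, G.degree v = k + t) → S.Nonempty →
      ∃ v ∈ S, (S.filter (G.Adj v)).card ≤ (t ^ 2 + t) / 2 := by
  obtain ⟨f, hf⟩ := hG.exists_isKTreeOrder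
  intro S hdeg hS
  obtain ⟨v, hvS, hmax⟩ := S.exists_max_image (fun u => (f u : ℕ)) hS
  refine ⟨v, hvS, ?_⟩
  have hcard := hf.card_le_of_isClique hn (hf.isClique_insert_filter_adj_of_forall_le hmax)
    fun w hw => hdeg w ((mem_insert.mp hw).elim (· ▸ hvS) fun h => (mem_filter.mp h).1)
  rw [card_insert_of_notMem fun h => G.loopless.irrefl v (mem_filter.mp h).2] at hcard
  have ht : t ≤ (t ^ 2 + t) / 2 := by
    rw [Nat.le_div_iff_mul_le two_pos]
    nlinarith
  omega
end
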